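/- Let K ⊆ ℝ² be a convex body with lattice width direction (1,0), with π₁(K) = [1−a, 1+b] for some 0 < a, b ≤ 1, such that the position of the longest vertical slicing length satisfies plvsl(K) ≤ 1, and let k = |int(K) ∩ ℤ²|. Then area(K) ≤ (a+b)²(k+1)/(2b) if a > b, and area(K) ≤ (a+b)(k+1) ≤ 2(k+1) if a ≤ b. -/

import Mathlib

open MeasureTheory Set

noncomputable section

/-- The set of integral lattice points of `ℝ × ℝ`. -/
def latticePts : Set (ℝ × ℝ) := {p | ∃ m n : ℤ, p = ((m : ℝ), (n : ℝ))}

/-- A planar convex body: compact, convex, with nonempty interior. -/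
def IsConvexBody (K : Set (ℝ × ℝ)) : Prop :=
  IsCompact K ∧ Convex ℝ K ∧ (interior K).Nonempty

/-- The width of `K` in direction `v` (as a linear functional via the dot product). -/
def width (K : Set (ℝ × ℝ)) (v : ℝ × ℝ) : ℝ :=
  sSup ((fun p => v.1 * p.1 + v.2 * p.2) '' K) - sInf ((fun p => v.1 * p.1 + v.2 * p.2) '' K)

/-- The lattice width of `K`: minimal width over nonzero integral dual vectors. -/
def latticeWidth (K : Set (ℝ × ℝ)) : ℝ :=
  sInf {w | ∃ v : ℤ × ℤ, v ≠ 0 ∧ w = width K ((v.1 : ℝ), (v.2 : ℝ))}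

/-- The length (1-dimensional Lebesgue measure) of the vertical slice of `K` at `x₁ = t`. -/
def sliceLen (K : Set (ℝ × ℝ)) (t : ℝ) : ℝ :=
  (volume {y : ℝ | (t, y) ∈ K}).toReal

/-- The set of positions of maximal vertical slicing length. -/
def maxSlicePos (K : Set (ℝ × ℝ)) : Set ℝ :=
  {t ∈ Prod.fst '' K | ∀ s ∈ Prod.fst '' K, sliceLen K s ≤ sliceLen K t}

/-- The position of the longest vertical slicing length: midpoint of the interval of maximizers. -/
def plvsl (K : Set (ℝ × ℝ)) : ℝ :=
  (sInf (maxSlicePos K) + sSup (maxSlicePos K)) / 2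

/-- The area of a planar set. -/
def area (K : Set (ℝ × ℝ)) : ℝ := (volume K).toReal

/-- The number of interior integral points of `K`. -/
def intPts (K : Set (ℝ × ℝ)) : ℕ := (interior K ∩ latticePts).ncard

/-- The triangle `T_{k,l}` with vertices `(0,0)`, `(1+1/l,0)` and `(0,(l+1)(k+1))`. -/
def Tkl (k l : ℤ) : Set (ℝ × ℝ) :=
  convexHull ℝ {((0 : ℝ), (0 : ℝ)), (1 + 1 / (l : ℝ), 0), (0, ((l : ℝ) + 1) * ((k : ℝ) + 1))}

/-- A lattice polygon: convex hull of a nonempty finite set of lattice points,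
two-dimensional (nonempty interior). -/
def IsLatticePolygon (P : Set (ℝ × ℝ)) : Prop :=
  (∃ S : Finset (ℤ × ℤ), S.Nonempty ∧
      P = convexHull ℝ ((fun q : ℤ × ℤ => ((q.1 : ℝ), (q.2 : ℝ))) '' ↑S)) ∧
    (interior P).Nonempty

/-- The affine map given by an integral matrix and integral translation vector. -/
def UnimodMap (a b c d e f : ℤ) : (ℝ × ℝ) → (ℝ × ℝ) := fun p =>
  ((a : ℝ) * p.1 + (b : ℝ) * p.2 + (e : ℝ), (c : ℝ) * p.1 + (d : ℝ) * p.2 + (f : ℝ))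

/-- Affine unimodular equivalence of subsets of the plane. -/
def UnimodEquiv (P Q : Set (ℝ × ℝ)) : Prop :=
  ∃ a b c d e f : ℤ, (a * d - b * c = 1 ∨ a * d - b * c = -1) ∧
    Q = UnimodMap a b c d e f '' P

/-- The `m`-th multiple of the standard lattice triangle `Δ₂`. -/
def stdTriangle (m : ℤ) : Set (ℝ × ℝ) :=
  convexHull ℝ {((0 : ℝ), (0 : ℝ)), ((m : ℝ), 0), (0, (m : ℝ))}

/-- The (outer) normal cone of `P` at a point `x`. -/
def normalCone (P : Set (ℝ × ℝ)) (x : ℝ × ℝ) : Set (ℝ × ℝ) :=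
  {v | ∀ y ∈ P, v.1 * y.1 + v.2 * y.2 ≤ v.1 * x.1 + v.2 * x.2}

/-- The rays of the smooth refinement of the normal fan of `P`: for each full-dimensional
normal cone `σ` (i.e. the normal cone of a vertex of `P`), the rays through the lattice points
on the bounded edges of `conv (σ ∩ (ℤ² \ {0}))`, which for a two-dimensional cone are exactly
the irreducible lattice points (Hilbert basis elements) of `σ`. -/
def smoothFanRays (P : Set (ℝ × ℝ)) : Set (ℤ × ℤ) :=
  {u | u ≠ 0 ∧ ∃ x ∈ P, (interior (normalCone P x)).Nonempty ∧
    ((u.1 : ℝ), (u.2 : ℝ)) ∈ normalCone P x ∧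
    ¬ ∃ v w : ℤ × ℤ, v ≠ 0 ∧ w ≠ 0 ∧ ((v.1 : ℝ), (v.2 : ℝ)) ∈ normalCone P x ∧
      ((w.1 : ℝ), (w.2 : ℝ)) ∈ normalCone P x ∧ u = v + w}

/-- `P` has denominator dividing `l`: it is the convex hull of finitely many points of
`(1/l)·ℤ²`. -/
def HasDenom (P : Set (ℝ × ℝ)) (l : ℤ) : Prop :=
  ∃ S : Finset (ℤ × ℤ), S.Nonempty ∧
    P = convexHull ℝ ((fun q : ℤ × ℤ => ((q.1 : ℝ) / (l : ℝ), (q.2 : ℝ) / (l : ℝ))) '' ↑S)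


/-! The slice length `f t = sliceLen K t` is concave on `[1 - a, 1 + b]`, and since the
maximizers of `f` have midpoint `≤ 1`, `f` does not increase to the right of `1`. Hence `f` lies
below a line through `(1, f 1)` of some slope `s ≤ 0`, and integrating gives
`area K ≤ f 1 * (a + b) + s * (b ^ 2 - a ^ 2) / 2`. The lattice points `(1, n)` strictly inside the
slice at `1` are interior points of `K`, so `f 1 ≤ k + 1`. For `a ≤ b` the slope term is
nonpositive; for `a > b` it is controlled by `0 ≤ f (1 + b) ≤ f 1 + s * b`. -/

def verticalSlice (K : Set (ℝ × ℝ)) (t : ℝ) : Set ℝ := {y | (t, y) ∈ K}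

def sliceBot (K : Set (ℝ × ℝ)) (t : ℝ) : ℝ := sInf (verticalSlice K t)

def sliceTop (K : Set (ℝ × ℝ)) (t : ℝ) : ℝ := sSup (verticalSlice K t)

section ConcaveFunction

variable {f : ℝ → ℝ} {A B x : ℝ}

theorem ConcaveOn.le_of_lt_of_midpoint_le {D M : Set ℝ} (hf : ConcaveOn ℝ D f)
    (hM : M.Nonempty) (hMbdd : BddAbove M) (hMmax : ∀ m ∈ M, m ∈ D ∧ IsMaxOn f D m)
    (hmid : (sInf M + sSup M) / 2 ≤ x) {t : ℝ} (ht : t ∈ D) (hxt : x < t) :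
    f t ≤ f x := by
  by_contra! hlt
  -- `x` lies between any maximizer `m ≤ x` and `t`, so concavity would force `f m < f t`.
  have hM_gt : ∀ m ∈ M, x < m := by
    intro m hm
    by_contra! hmx
    have hseg : x ∈ segment ℝ m t := Icc_subset_segment ⟨hmx, hxt.le⟩
    have hmin := hf.ge_on_segment (hMmax m hm).1 ht hseg
    have hmax := isMaxOn_iff.1 (hMmax m hm).2 t ht
    rcases min_le_iff.1 hmin with h | h <;> linarith
  obtain ⟨m₀, hm₀⟩ := hM
  have hinf : x ≤ sInf M := le_csInf ⟨m₀, hm₀⟩ fun m hm => (hM_gt m hm).le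
  have hsup : m₀ ≤ sSup M := le_csSup hMbdd hm₀
  linarith [hM_gt m₀ hm₀]

theorem ConcaveOn.exists_nonpos_slope_le (hf : ConcaveOn ℝ (Icc A B) f) (hx : x ∈ Ico A B)
    (hright : ∀ t ∈ Ioc x B, f t ≤ f x) :
    ∃ s ≤ 0, ∀ t ∈ Icc A B, f t ≤ f x + s * (t - x) := by
  set S := (fun t => (f t - f x) / (t - x)) '' Ioc x B
  have hS : S.Nonempty := ⟨_, B, ⟨hx.2, le_rfl⟩, rfl⟩
  have hS_nonpos : ∀ r ∈ S, r ≤ 0 := by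
    rintro _ ⟨t, ht, rfl⟩
    exact div_nonpos_of_nonpos_of_nonneg (by linarith [hright t ht]) (by linarith [ht.1])
  refine ⟨sSup S, csSup_le hS hS_nonpos, fun t ht => ?_⟩
  rcases lt_trichotomy t x with htx | rfl | hxt
  · have hslope : sSup S ≤ (f x - f t) / (x - t) := by
      refine csSup_le hS ?_
      rintro _ ⟨t', ht', rfl⟩
      exact hf.slope_anti_adjacent ht ⟨by linarith [hx.1, ht'.1], ht'.2⟩ htx ht'.1
    rw [le_div_iff₀ (by linarith)] at hslope
    linarith
  · simp
  · have hslope : (f t - f x) / (t - x) ≤ sSup S :=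
      le_csSup ⟨0, hS_nonpos⟩ ⟨t, ⟨hxt, ht.2⟩, rfl⟩
    rw [div_le_iff₀ (by linarith)] at hslope
    linarith

end ConcaveFunction

section Slices

variable {K : Set (ℝ × ℝ)}

theorem verticalSlice_nonempty_iff {t : ℝ} : (verticalSlice K t).Nonempty ↔ t ∈ Prod.fst '' K :=
  ⟨fun ⟨y, hy⟩ => ⟨(t, y), hy, rfl⟩, fun ⟨p, hp, hpt⟩ => ⟨p.2, by rw [← hpt]; exact hp⟩⟩

theorem IsCompact.verticalSlice (hK : IsCompact K) (t : ℝ) : IsCompact (verticalSlice K t) :=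
  (hK.image continuous_snd).of_isClosed_subset
    (hK.isClosed.preimage (Continuous.prodMk_right t)) fun y hy => ⟨(t, y), hy, rfl⟩

theorem Convex.verticalSlice (hK : Convex ℝ K) (t : ℝ) : Convex ℝ (verticalSlice K t) := by
  intro y₁ h₁ y₂ h₂ α β hα hβ hαβ
  show (t, _) ∈ K
  simpa [← add_mul, hαβ] using hK h₁ h₂ hα hβ hαβ

variable (hKc : IsCompact K) (hKconv : Convex ℝ K)
include hKc

theorem sliceBot_mem {t : ℝ} (ht : t ∈ Prod.fst '' K) : (t, sliceBot K t) ∈ K :=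
  (hKc.verticalSlice t).isClosed.csInf_mem (verticalSlice_nonempty_iff.2 ht)
    (hKc.verticalSlice t).bddBelow

theorem sliceTop_mem {t : ℝ} (ht : t ∈ Prod.fst '' K) : (t, sliceTop K t) ∈ K :=
  (hKc.verticalSlice t).isClosed.csSup_mem (verticalSlice_nonempty_iff.2 ht)
    (hKc.verticalSlice t).bddAbove

theorem sliceBot_le {t y : ℝ} (h : (t, y) ∈ K) : sliceBot K t ≤ y :=
  csInf_le (hKc.verticalSlice t).bddBelow h

theorem le_sliceTop {t y : ℝ} (h : (t, y) ∈ K) : y ≤ sliceTop K t :=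
  le_csSup (hKc.verticalSlice t).bddAbove h

include hKconv

theorem verticalSlice_eq_Icc {t : ℝ} (ht : t ∈ Prod.fst '' K) :
    verticalSlice K t = Icc (sliceBot K t) (sliceTop K t) :=
  Subset.antisymm (fun _ hy => ⟨sliceBot_le hKc hy, le_sliceTop hKc hy⟩)
    ((hKconv.verticalSlice t).ordConnected.out (sliceBot_mem hKc ht) (sliceTop_mem hKc ht))

theorem sliceLen_eq_sliceTop_sub_sliceBot {t : ℝ} (ht : t ∈ Prod.fst '' K) :
    sliceLen K t = sliceTop K t - sliceBot K t := by
  have hle : sliceBot K t ≤ sliceTop K t := sliceBot_le hKc (sliceTop_mem hKc ht)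
  rw [sliceLen, ← verticalSlice, verticalSlice_eq_Icc hKc hKconv ht, Real.volume_Icc,
    ENNReal.toReal_ofReal (sub_nonneg.2 hle)]

theorem convexOn_sliceBot : ConvexOn ℝ (Prod.fst '' K) (sliceBot K) := by
  refine ⟨hKconv.linear_image (LinearMap.fst ℝ ℝ ℝ), fun t₁ ht₁ t₂ ht₂ α β hα hβ hαβ => ?_⟩
  apply sliceBot_le hKc
  simpa using hKconv (sliceBot_mem hKc ht₁) (sliceBot_mem hKc ht₂) hα hβ hαβ

theorem concaveOn_sliceTop : ConcaveOn ℝ (Prod.fst '' K) (sliceTop K) := by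
  refine ⟨hKconv.linear_image (LinearMap.fst ℝ ℝ ℝ), fun t₁ ht₁ t₂ ht₂ α β hα hβ hαβ => ?_⟩
  apply le_sliceTop hKc
  simpa using hKconv (sliceTop_mem hKc ht₁) (sliceTop_mem hKc ht₂) hα hβ hαβ

theorem concaveOn_sliceLen : ConcaveOn ℝ (Prod.fst '' K) (sliceLen K) :=
  ((concaveOn_sliceTop hKc hKconv).sub (convexOn_sliceBot hKc hKconv)).congr
    fun _ ht => (sliceLen_eq_sliceTop_sub_sliceBot hKc hKconv ht).symm

/-- The superlevel set `{t | c ≤ sliceLen K t}` is the projection of the compact set of points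
of `K` whose translate by `(0, c)` stays in `K`. -/
theorem upperSemicontinuous_sliceLen : UpperSemicontinuous (sliceLen K) := by
  refine upperSemicontinuous_iff_isClosed_preimage.2 fun c => ?_
  rcases le_or_gt c 0 with hc | hc
  · convert isClosed_univ
    exact eq_univ_of_forall fun t => hc.trans ENNReal.toReal_nonneg
  have hcomp : IsCompact (Prod.fst '' (K ∩ (fun p : ℝ × ℝ => (p.1, p.2 + c)) ⁻¹' K)) :=
    ((hKc.inter_right (hKc.isClosed.preimage (by fun_prop))).image continuous_fst)
  convert hcomp.isClosed
  ext t
  constructor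
  · intro (hct : c ≤ sliceLen K t)
    have ht : t ∈ Prod.fst '' K := by
      by_contra ht
      rw [sliceLen, ← verticalSlice, not_nonempty_iff_eq_empty.1
        (mt verticalSlice_nonempty_iff.1 ht)] at hct
      simp only [measure_empty, ENNReal.toReal_zero] at hct
      linarith
    rw [sliceLen_eq_sliceTop_sub_sliceBot hKc hKconv ht] at hct
    have hmem : sliceBot K t + c ∈ verticalSlice K t := by
      rw [verticalSlice_eq_Icc hKc hKconv ht]
      constructor <;> linarith
    exact ⟨_, ⟨sliceBot_mem hKc ht, hmem⟩, rfl⟩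
  · rintro ⟨p, ⟨hp, hpc⟩, rfl⟩
    show c ≤ sliceLen K p.1
    rw [sliceLen_eq_sliceTop_sub_sliceBot hKc hKconv ⟨p, hp, rfl⟩]
    linarith [sliceBot_le hKc hp, le_sliceTop hKc hpc]

theorem exists_isMaxOn_sliceLen (hne : K.Nonempty) :
    ∃ t ∈ Prod.fst '' K, IsMaxOn (sliceLen K) (Prod.fst '' K) t :=
  (upperSemicontinuous_sliceLen hKc hKconv).upperSemicontinuousOn _ |>.exists_isMaxOn
    (hne.image _) (hKc.image continuous_fst)

theorem sliceLen_le_of_plvsl_le (hne : K.Nonempty) {x t : ℝ} (hpl : plvsl K ≤ x)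
    (ht : t ∈ Prod.fst '' K) (hxt : x < t) : sliceLen K t ≤ sliceLen K x := by
  obtain ⟨m, hm, hmax⟩ := exists_isMaxOn_sliceLen hKc hKconv hne
  refine (concaveOn_sliceLen hKc hKconv).le_of_lt_of_midpoint_le (M := maxSlicePos K)
    ⟨m, hm, isMaxOn_iff.1 hmax⟩ ((hKc.image continuous_fst).bddAbove.mono fun _ h => h.1)
    (fun m hm => ⟨hm.1, isMaxOn_iff.2 hm.2⟩) hpl ht hxt

theorem mem_interior_of_sliceBot_lt_of_lt_sliceTop {t y : ℝ} (ht : t ∈ interior (Prod.fst '' K))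
    (hbot : sliceBot K t < y) (htop : y < sliceTop K t) : (t, y) ∈ interior K := by
  have hcont : ∀ g : ℝ → ℝ, ContinuousOn g (interior (Prod.fst '' K)) →
      ContinuousAt (fun p : ℝ × ℝ => g p.1) (t, y) := fun g hg =>
    (hg.continuousAt (isOpen_interior.mem_nhds ht)).comp continuousAt_fst
  have hbot' := hcont _ (convexOn_sliceBot hKc hKconv).continuousOn_interior
  have htop' := hcont _ (concaveOn_sliceTop hKc hKconv).continuousOn_interior
  rw [mem_interior_iff_mem_nhds]
  filter_upwards [continuousAt_fst.preimage_mem_nhds (isOpen_interior.mem_nhds ht),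
    hbot'.eventually_lt continuousAt_snd hbot, continuousAt_snd.eventually_lt htop' htop]
    with p hp hpbot hptop
  show p.2 ∈ verticalSlice K p.1
  rw [verticalSlice_eq_Icc hKc hKconv (interior_subset hp)]
  exact ⟨hpbot.le, hptop.le⟩

end Slices

theorem sub_sub_one_le_card_Ioo_floor_ceil (g h : ℝ) :
    h - g - 1 ≤ (Finset.Ioo ⌊g⌋ ⌈h⌉).card := by
  rw [Int.card_Ioo]
  have hcast : ((⌈h⌉ - ⌊g⌋ - 1 : ℤ) : ℝ) ≤ ((⌈h⌉ - ⌊g⌋ - 1).toNat : ℤ) := by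
    exact_mod_cast Int.self_le_toNat _
  push_cast at hcast
  linarith [Int.le_ceil h, Int.floor_le g]

theorem IsCompact.finite_inter_latticePts {K : Set (ℝ × ℝ)} (hK : IsCompact K) :
    (K ∩ latticePts).Finite := by
  have hemb := Int.isClosedEmbedding_coe_real.prodMap Int.isClosedEmbedding_coe_real
  refine ((hemb.isCompact_preimage hK).finite_of_discrete.image (Prod.map (↑) (↑))).subset ?_
  rintro _ ⟨hp, m, n, rfl⟩
  exact ⟨(m, n), hp, rfl⟩

theorem sliceLen_le_intPts_add_one {K : Set (ℝ × ℝ)} (hKc : IsCompact K) (hKconv : Convex ℝ K)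
    {m : ℤ} (hm : (m : ℝ) ∈ interior (Prod.fst '' K)) : sliceLen K m ≤ intPts K + 1 := by
  set F := Finset.Ioo ⌊sliceBot K m⌋ ⌈sliceTop K m⌉
  have hinj : Function.Injective fun n : ℤ => ((m : ℝ), (n : ℝ)) := fun _ _ h => by
    simpa using h
  have hF : (fun n : ℤ => ((m : ℝ), (n : ℝ))) '' F ⊆ interior K ∩ latticePts := by
    rintro _ ⟨n, hn, rfl⟩
    rw [Finset.coe_Ioo, mem_Ioo, Int.floor_lt, Int.lt_ceil] at hn
    exact ⟨mem_interior_of_sliceBot_lt_of_lt_sliceTop hKc hKconv hm hn.1 hn.2, m, n, rfl⟩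
  have hcard : F.card ≤ intPts K := by
    rw [← ncard_coe_finset, ← ncard_image_of_injective _ hinj]
    exact ncard_le_ncard hF (hKc.finite_inter_latticePts.subset
      (inter_subset_inter_left _ interior_subset))
  rw [sliceLen_eq_sliceTop_sub_sliceBot hKc hKconv (interior_subset hm)]
  linarith [sub_sub_one_le_card_Ioo_floor_ceil (sliceBot K m) (sliceTop K m),
    (Nat.cast_le (α := ℝ)).2 hcard]

theorem area_le_integral_of_sliceLen_le {K : Set (ℝ × ℝ)} (hKc : IsCompact K) {A B : ℝ}
    (hAB : A ≤ B) (hproj : Prod.fst '' K ⊆ Icc A B) {g : ℝ → ℝ} (hg : IntegrableOn g (Icc A B))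
    (hle : ∀ t ∈ Icc A B, sliceLen K t ≤ g t) : area K ≤ ∫ t in A..B, g t := by
  have hslice : ∀ t, volume (verticalSlice K t) ≤ (Icc A B).indicator (ENNReal.ofReal ∘ g) t := by
    intro t
    by_cases ht : t ∈ Icc A B
    · rw [indicator_of_mem ht, Function.comp_apply,
        ← ENNReal.ofReal_toReal (hKc.verticalSlice t).measure_ne_top]
      exact ENNReal.ofReal_le_ofReal (hle t ht)
    · have : verticalSlice K t = ∅ :=
        not_nonempty_iff_eq_empty.1 fun hne => ht (hproj (verticalSlice_nonempty_iff.1 hne))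
      simp [this]
  have hvol : volume K ≤ ENNReal.ofReal (∫ t in Icc A B, g t) := by
    rw [Measure.volume_eq_prod, Measure.prod_apply hKc.isClosed.measurableSet,
      ofReal_integral_eq_lintegral_ofReal hg
        ((ae_restrict_iff' measurableSet_Icc).2 (Filter.Eventually.of_forall fun t ht =>
          ENNReal.toReal_nonneg.trans (hle t ht))),
      ← lintegral_indicator measurableSet_Icc]
    exact lintegral_mono hslice
  rw [intervalIntegral.integral_of_le hAB, ← integral_Icc_eq_integral_Ioc]
  exact ENNReal.toReal_le_of_le_ofReal
    (setIntegral_nonneg measurableSet_Icc fun t ht => ENNReal.toReal_nonneg.trans (hle t ht)) hvol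

theorem integral_const_add_mul_sub (x₀ a b c s : ℝ) :
    ∫ t in (x₀ - a)..(x₀ + b), (c + s * (t - x₀)) = c * (a + b) + s * (b ^ 2 - a ^ 2) / 2 := by
  rw [intervalIntegral.integral_comp_sub_right (fun t => c + s * t),
    intervalIntegral.integral_add intervalIntegrable_const
      (intervalIntegral.intervalIntegrable_id.const_mul s),
    intervalIntegral.integral_const_mul, integral_id, intervalIntegral.integral_const, smul_eq_mul]
  ring

theorem stmt6_general (K : Set (ℝ × ℝ)) (hK : IsConvexBody K) (a b : ℝ)
    (ha : 0 < a) (ha1 : a ≤ 1) (hb : 0 < b) (hb1 : b ≤ 1)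
    (hproj : Prod.fst '' K = Set.Icc (1 - a) (1 + b))
    (hpl : plvsl K ≤ 1) :
    (a > b → area K ≤ (a + b) ^ 2 * ((intPts K : ℝ) + 1) / (2 * b)) ∧
      (a ≤ b → area K ≤ (a + b) * ((intPts K : ℝ) + 1) ∧
        (a + b) * ((intPts K : ℝ) + 1) ≤ 2 * ((intPts K : ℝ) + 1)) := by
  obtain ⟨hKc, hKconv, hKint⟩ := hK
  have hconc : ConcaveOn ℝ (Icc (1 - a) (1 + b)) (sliceLen K) :=
    hproj ▸ concaveOn_sliceLen hKc hKconv
  have hright : ∀ t ∈ Ioc 1 (1 + b), sliceLen K t ≤ sliceLen K 1 := fun t ht =>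
    sliceLen_le_of_plvsl_le hKc hKconv (hKint.mono interior_subset) hpl
      (hproj ▸ ⟨by linarith [ht.1], ht.2⟩) ht.1
  obtain ⟨s, hs, hline⟩ := hconc.exists_nonpos_slope_le ⟨by linarith, by linarith⟩ hright
  set c := sliceLen K 1
  have harea : area K ≤ c * (a + b) + s * (b ^ 2 - a ^ 2) / 2 := by
    rw [← integral_const_add_mul_sub]
    exact area_le_integral_of_sliceLen_le hKc (by linarith) hproj.subset
      (by fun_prop : Continuous fun t => c + s * (t - 1)).integrableOn_Icc hline
  have hcount : c ≤ intPts K + 1 := by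
    simpa using sliceLen_le_intPts_add_one hKc hKconv (m := 1)
      (by rw [hproj, interior_Icc]; constructor <;> simp [ha, hb])
  have hcsb : 0 ≤ c + s * b := by
    have hend := hline (1 + b) ⟨by linarith, le_rfl⟩
    rw [add_sub_cancel_left] at hend
    have hnonneg : 0 ≤ sliceLen K (1 + b) := ENNReal.toReal_nonneg
    linarith
  refine ⟨fun hab => ?_, fun hab => ⟨?_, ?_⟩⟩
  · rw [le_div_iff₀ (by positivity)]
    have hab' : 0 ≤ (a + b) * (a - b) := mul_nonneg (by linarith) (by linarith)
    nlinarith [mul_nonneg hab' hcsb, mul_le_mul_of_nonneg_left hcount (sq_nonneg (a + b))]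
  · nlinarith [mul_nonpos_of_nonpos_of_nonneg hs (by nlinarith : 0 ≤ b ^ 2 - a ^ 2)]
  · exact mul_le_mul_of_nonneg_right (by linarith) (by positivity)

theorem stmt6 (K : Set (ℝ × ℝ)) (hK : IsConvexBody K) (a b : ℝ)
    (ha : 0 < a) (ha1 : a ≤ 1) (hb : 0 < b) (hb1 : b ≤ 1)
    (hproj : Prod.fst '' K = Set.Icc (1 - a) (1 + b))
    (hdir : width K (1, 0) = latticeWidth K)
    (hpl : plvsl K ≤ 1) :
    (a > b → area K ≤ (a + b) ^ 2 * ((intPts K : ℝ) + 1) / (2 * b)) ∧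
      (a ≤ b → area K ≤ (a + b) * ((intPts K : ℝ) + 1) ∧
        (a + b) * ((intPts K : ℝ) + 1) ≤ 2 * ((intPts K : ℝ) + 1)) :=
  stmt6_general K hK a b ha ha1 hb hb1 hproj hpl
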